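/- arXiv:1311.5713 — 4 statements merged into one kernel-verified Lean document; each statement's English description precedes it below -/
import Mathlib

section
/- Let T be a set of even size t ≥ 1, let ℬ ⊆ T^(t/2), and let α ∈ [4/t, 1]. Then there exists ℰ ⊆ ℬ with |ℰ| > |ℬ| − α·C(t, t/2) such that every E ∈ ℰ has at least α·t²/32 neighbours in ℰ. -/
/-!
Prune `ℬ` greedily: while some member has fewer than `d = α t² / 32` neighbours among the
remaining sets, delete it. What survives has minimum degree at least `d`, and since every deleted
set had fewer than `d` neighbours among the sets still present when it was deleted, the deleted
family `S` has average degree less than `2d` within itself.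

On the other hand, a family `S` of `k`-sets (`k = t/2`) cannot have small average degree unless it
is small. Let `f P` count the members of `S` containing a `(k-1)`-set `P`. Then `∑ f P = k |S|`,
while `∑ (f P)²` counts pairs `(A, B) ∈ S²` with a common `(k-1)`-subset, i.e. `k |S|` plus the
number of ordered neighbouring pairs. Cauchy–Schwarz over the `C(t, k-1) ≤ C(t, k)` sets `P`
gives `k² |S| ≤ C(t, k) (k + 2d)`, and `4/t ≤ α` turns this into `|S| ≤ 3/4 · α C(t, k)`.
-/

open Finset

section Pruning

variable {β : Type*} [DecidableEq β] (r : β → β → Prop) [DecidableRel r] [Std.Symm r]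

theorem Finset.exists_subset_le_card_filter_and_sum_card_filter_sdiff_le (d : ℝ)
    (s : Finset β) :
    ∃ e ⊆ s, (∀ x ∈ e, d ≤ #{y ∈ e | r x y}) ∧
      ∑ x ∈ s \ e, (#{y ∈ s \ e | r x y} : ℝ) ≤ 2 * d * #(s \ e) := by
  induction s using Finset.strongInduction with
  | H s ih =>
  by_cases hcore : ∀ x ∈ s, d ≤ #{y ∈ s | r x y}
  · exact ⟨s, subset_rfl, hcore, by simp⟩
  push Not at hcore
  obtain ⟨v, hv, hvd⟩ := hcore
  obtain ⟨e, hes, hdeg, hsum⟩ := ih (s.erase v) (erase_ssubset hv)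
  refine ⟨e, hes.trans (erase_subset _ _), hdeg, ?_⟩
  set R := s.erase v \ e
  have hvR : v ∉ R := by simp [R]
  have hsR : s \ e = insert v R := by
    have hve : v ∉ e := fun h => (mem_erase.1 (hes h)).1 rfl
    ext x; by_cases hx : x = v <;> simp [R, hx, hv, hve]
  have hdeg_v : (#{y ∈ insert v R | r v y} : ℝ) < d := by
    refine lt_of_le_of_lt ?_ hvd
    rw [← hsR]
    exact_mod_cast card_le_card (filter_subset_filter _ sdiff_subset)
  have hcodeg_v : (#{x ∈ R | r x v} : ℝ) < d := by
    refine lt_of_le_of_lt ?_ hdeg_v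
    simp_rw [Std.Symm.iff (r := r) _ v]
    exact_mod_cast card_le_card (filter_subset_filter _ (subset_insert _ _))
  have hdeg_R : ∀ x ∈ R,
      (#{y ∈ insert v R | r x y} : ℝ) = #{y ∈ R | r x y} + if r x v then 1 else 0 := by
    intro x _
    rw [filter_insert]
    split_ifs with h
    · rw [card_insert_of_notMem fun h' => hvR (mem_filter.1 h').1]
      push_cast
      ring
    · simp
  rw [hsR, sum_insert hvR, sum_congr rfl hdeg_R, sum_add_distrib, sum_boole,
    card_insert_of_notMem hvR]
  push_cast
  linarith

end Pruning

section SetFamilies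

variable {α : Type*} [DecidableEq α]

theorem Finset.filter_powersetCard_subset_of_subset {A T : Finset α} (h : A ⊆ T) (m : ℕ) :
    {P ∈ T.powersetCard m | P ⊆ A} = A.powersetCard m := by
  ext P
  simp only [mem_filter, mem_powersetCard]
  exact ⟨fun ⟨⟨_, hP⟩, hPA⟩ => ⟨hPA, hP⟩, fun ⟨hPA, hP⟩ => ⟨⟨hPA.trans h, hP⟩, hPA⟩⟩

theorem Finset.sum_card_filter_subset_eq_sum_choose {ι : Type*} (s : Finset ι)
    (g : ι → Finset α) {T : Finset α} (hg : ∀ i ∈ s, g i ⊆ T) (m : ℕ) :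
    ∑ P ∈ T.powersetCard m, #{i ∈ s | P ⊆ g i} = ∑ i ∈ s, (#(g i)).choose m := by
  refine (sum_card_bipartiteAbove_eq_sum_card_bipartiteBelow fun P i => P ⊆ g i).trans <|
    sum_congr rfl fun i hi => ?_
  rw [bipartiteBelow, filter_powersetCard_subset_of_subset (hg i hi), card_powersetCard]

theorem Finset.card_symmDiff_add_two_mul_card_inter (A B : Finset α) :
    #(symmDiff A B) + 2 * #(A ∩ B) = #A + #B := by
  rw [symmDiff_def, sup_eq_union, card_union_of_disjoint disjoint_sdiff_sdiff]
  have := card_sdiff_add_card_inter A B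
  have := card_sdiff_add_card_inter B A
  rw [inter_comm] at this
  omega

theorem Finset.choose_card_inter_pred {A B : Finset α} {k : ℕ} (hk : 1 ≤ k) (hA : #A = k)
    (hB : #B = k) :
    (#(A ∩ B)).choose (k - 1) =
      (if A = B then k else 0) + if #(symmDiff A B) = 2 then 1 else 0 := by
  have hsymm := card_symmDiff_add_two_mul_card_inter A B
  obtain rfl | hne := eq_or_ne A B
  · simp [hA, Nat.choose_symm hk]
  have hlt : #(A ∩ B) < k := by
    by_contra! hge
    exact hne <| (eq_of_subset_of_card_le inter_subset_left (by omega)).symm.trans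
      (eq_of_subset_of_card_le inter_subset_right (by omega))
  obtain hi | hi := eq_or_lt_of_le (show #(A ∩ B) ≤ k - 1 by omega)
  · simp [hne, hi, show #(symmDiff A B) = 2 by omega]
  · simp [hne, Nat.choose_eq_zero_of_lt hi, show #(symmDiff A B) ≠ 2 by omega]

theorem Finset.sq_card_mul_le_choose_mul {T : Finset α} {k : ℕ} (hk : 1 ≤ k)
    {S : Finset (Finset α)} (hS : S ⊆ T.powersetCard k) :
    (#S * k) ^ 2 ≤
      (#T).choose (k - 1) * (#S * k + ∑ A ∈ S, #{B ∈ S | #(symmDiff A B) = 2}) := by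
  have hST : ∀ A ∈ S, A ⊆ T ∧ #A = k := fun A hA => mem_powersetCard.1 (hS hA)
  have hsum : ∑ P ∈ T.powersetCard (k - 1), #{A ∈ S | P ⊆ A} = #S * k := by
    refine (sum_card_filter_subset_eq_sum_choose S id (fun A hA => (hST A hA).1) _).trans ?_
    rw [sum_congr rfl fun A hA => by rw [id, (hST A hA).2, Nat.choose_symm hk,
      Nat.choose_one_right], sum_const, smul_eq_mul]
  have hsum_sq : ∑ P ∈ T.powersetCard (k - 1), #{A ∈ S | P ⊆ A} ^ 2 =
      #S * k + ∑ A ∈ S, #{B ∈ S | #(symmDiff A B) = 2} := by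
    have hsq : ∀ P : Finset α, #{A ∈ S | P ⊆ A} ^ 2 = #{p ∈ S ×ˢ S | P ⊆ p.1 ∩ p.2} := by
      intro P
      simp_rw [sq, ← card_product, subset_inter_iff, filter_product]
    simp_rw [hsq]
    rw [sum_card_filter_subset_eq_sum_choose (S ×ˢ S) (fun p => p.1 ∩ p.2)
      fun p hp => inter_subset_left.trans (hST p.1 (mem_product.1 hp).1).1, sum_product,
      sum_congr rfl fun A hA => sum_congr rfl fun B hB =>
        choose_card_inter_pred hk (hST A hA).2 (hST B hB).2]
    simp [sum_add_distrib, sum_ite_eq, mul_comm]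
  calc (#S * k) ^ 2 = (∑ P ∈ T.powersetCard (k - 1), #{A ∈ S | P ⊆ A}) ^ 2 := by rw [hsum]
    _ ≤ _ := sq_sum_le_card_mul_sum_sq
    _ = _ := by rw [hsum_sq, card_powersetCard, Nat.cast_id]

theorem Finset.card_mul_sq_le_of_sum_card_filter_le {T : Finset α} {k : ℕ} (hk : 1 ≤ k)
    {S : Finset (Finset α)} (hS : S ⊆ T.powersetCard k) {c : ℝ} (hc₀ : 0 ≤ c)
    (hc : ∑ A ∈ S, (#{B ∈ S | #(symmDiff A B) = 2} : ℝ) ≤ c * #S) :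
    (#S : ℝ) * k ^ 2 ≤ (#T).choose (k - 1) * (k + c) := by
  have hsq : ((#S : ℝ) * k) ^ 2 ≤
      (#T).choose (k - 1) * (#S * k + ∑ A ∈ S, (#{B ∈ S | #(symmDiff A B) = 2} : ℝ)) := by
    exact_mod_cast sq_card_mul_le_choose_mul hk hS
  have hC : (0 : ℝ) ≤ (#T).choose (k - 1) := Nat.cast_nonneg _
  obtain hS₀ | hS₀ := (Nat.cast_nonneg (α := ℝ) #S).eq_or_lt
  · rw [← hS₀, zero_mul]
    positivity
  refine le_of_mul_le_mul_left ?_ hS₀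
  nlinarith [mul_le_mul_of_nonneg_left hc hC]

theorem Finset.card_lt_mul_choose_of_sum_card_filter_le {T : Finset α} {k : ℕ} (hk : 1 ≤ k)
    (hT : #T = 2 * k) {S : Finset (Finset α)} (hS : S ⊆ T.powersetCard k) {a : ℝ}
    (ha : 2 ≤ a * k)
    (hsum : ∑ A ∈ S, (#{B ∈ S | #(symmDiff A B) = 2} : ℝ) ≤ a * k ^ 2 / 4 * #S) :
    (#S : ℝ) < a * (2 * k).choose k := by
  have hk₀ : (0 : ℝ) < k := by exact_mod_cast hk
  have ha₀ : 0 < a := pos_of_mul_pos_left (two_pos.trans_le ha) hk₀.le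
  have hbound := card_mul_sq_le_of_sum_card_filter_le hk hS (by positivity) hsum
  rw [hT] at hbound
  have hmid : ((2 * k).choose (k - 1) : ℝ) ≤ (2 * k).choose k := by
    exact_mod_cast (Nat.mul_div_cancel_left k two_pos) ▸ Nat.choose_le_middle (k - 1) (2 * k)
  have hC : (0 : ℝ) < (2 * k).choose k := by exact_mod_cast Nat.choose_pos (by omega)
  have hkey : (#S : ℝ) * k ^ 2 ≤ 3 / 4 * (a * (2 * k).choose k) * k ^ 2 :=
    calc (#S : ℝ) * k ^ 2 ≤ (2 * k).choose (k - 1) * (k + a * k ^ 2 / 4) := hbound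
      _ ≤ (2 * k).choose k * (3 / 4 * a * k ^ 2) := by gcongr; nlinarith
      _ = _ := by ring
  have hlt : 3 / 4 * (a * (2 * k).choose k) * (k : ℝ) ^ 2 < a * (2 * k).choose k * k ^ 2 := by
    linarith [mul_pos (mul_pos ha₀ hC) (pow_pos hk₀ 2)]
  exact lt_of_mul_lt_mul_right (hkey.trans_lt hlt) (by positivity)

end SetFamilies

theorem stmt_5_general {α : Type*} [DecidableEq α] (T : Finset α) (t : ℕ) (ht : T.card = t)
    (hteven : Even t) (ht1 : 1 ≤ t) (ℬ : Finset (Finset α))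
    (hℬ : ℬ ⊆ T.powersetCard (t / 2)) (a : ℝ) (ha : 4 / (t : ℝ) ≤ a) :
    ∃ ℰ : Finset (Finset α), ℰ ⊆ ℬ ∧
      (ℬ.card : ℝ) - a * (Nat.choose t (t / 2) : ℝ) < (ℰ.card : ℝ) ∧
      ∀ E ∈ ℰ, a * (t : ℝ) ^ 2 / 32 ≤
        ((ℰ.filter (fun B => (symmDiff E B).card = 2)).card : ℝ) := by
  obtain ⟨k, rfl⟩ := hteven
  rw [← two_mul] at *
  rw [show 2 * k / 2 = k by omega] at hℬ ⊢
  have : Std.Symm fun A B : Finset α => #(symmDiff A B) = 2 :=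
    ⟨fun A B h => by rwa [symmDiff_comm]⟩
  obtain ⟨ℰ, hℰ, hdeg, hsum⟩ := exists_subset_le_card_filter_and_sum_card_filter_sdiff_le
    (fun A B : Finset α => #(symmDiff A B) = 2) (a * ((2 * k : ℕ) : ℝ) ^ 2 / 32) ℬ
  refine ⟨ℰ, hℰ, ?_, hdeg⟩
  have hak : 2 ≤ a * k := by
    rw [div_le_iff₀ (by positivity)] at ha
    push_cast at ha
    linarith
  have hS := card_lt_mul_choose_of_sum_card_filter_le (by omega) ht (sdiff_subset.trans hℬ) hak
    (hsum.trans_eq (by push_cast; ring))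
  rw [card_sdiff_of_subset hℰ, Nat.cast_sub (card_le_card hℰ)] at hS
  linarith

theorem stmt_5 {α : Type*} [DecidableEq α] (T : Finset α) (t : ℕ) (ht : T.card = t)
    (hteven : Even t) (ht1 : 1 ≤ t) (ℬ : Finset (Finset α))
    (hℬ : ℬ ⊆ T.powersetCard (t / 2)) (a : ℝ) (ha : 4 / (t : ℝ) ≤ a) (ha1 : a ≤ 1) :
    ∃ ℰ : Finset (Finset α), ℰ ⊆ ℬ ∧
      (ℬ.card : ℝ) - a * (Nat.choose t (t / 2) : ℝ) < (ℰ.card : ℝ) ∧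
      ∀ E ∈ ℰ, a * (t : ℝ) ^ 2 / 32 ≤
        ((ℰ.filter (fun B => (symmDiff E B).card = 2)).card : ℝ) :=
  stmt_5_general T t ht hteven ht1 ℬ hℬ a ha
end

section
/- Suppose 𝒜 ⊆ 𝒫({1,...,n}) contains no two sets A, B with |B \ A| = 2|A \ B|, A \ B nonempty, and a < b for every a ∈ A \ B and b ∈ B \ A. Then |𝒜| = o(2^n); more precisely there is an absolute constant C such that |𝒜| ≤ C·e^{120(log n)^{1/2}}·2^n/n^{1/2}. -/
/-!
Split the ground set into the segment `L` of its first `⌊n/2⌋` elements and the rest, and say that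
`B` lies above `A` if `B` arises from `A` by deleting elements of `L` and adding elements outside
`L`. This is a partial order, and if `B ≠ A` lies above `A` and both have the same rank
`2 |A ∩ L| + |A \ L|`, then `(A, B)` is an ordered tilted pair. So each rank class of the family is
an antichain in a graded poset whose levels `{X | |X ∩ L| = a, |X \ L| = b}` (with `2a + b` fixed)
satisfy the local LYM inequality by double counting; by LYM, the class of rank `c` has at most
`max_{2a+b=c} C(|L|, a) C(n - |L|, b)` members. This maximum is `O(2^n / n)` times a Gaussian of
width `O(√n)` in `c`, so summing over `c` gives `|𝒜| = O(2^n / √n)`.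
-/

open Finset Function Real

section GradedLYM

variable {β : Type*} (r : β → β → Prop) [DecidableRel r]

def aboveIn (F t : Finset β) : Finset β := {Y ∈ t | ∃ X ∈ F, r X Y}

variable {r} {s : ℕ → Finset β} {W : ℕ → ℝ} {k : ℕ} {𝒜 : Finset β}

theorem aboveIn_aboveIn_subset [IsTrans β r] (t t' : Finset β) :
    aboveIn r (aboveIn r 𝒜 t) t' ⊆ aboveIn r 𝒜 t' := fun Y hY ↦ by
  obtain ⟨hY, X, hX, hXY⟩ := mem_filter.1 hY
  obtain ⟨-, A, hA, hAX⟩ := mem_filter.1 hX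
  exact mem_filter.2 ⟨hY, A, hA, trans_of r hAX hXY⟩

variable [DecidableEq β]

theorem inter_subset_aboveIn [Std.Refl r] (t : Finset β) : 𝒜 ∩ t ⊆ aboveIn r 𝒜 t :=
  fun Y hY ↦ mem_filter.2 ⟨(mem_inter.1 hY).2, Y, (mem_inter.1 hY).1, refl_of r Y⟩

theorem disjoint_aboveIn_aboveIn_inter [IsTrans β r] [Std.Antisymm r]
    (h𝒜 : IsAntichain r (𝒜 : Set β)) {t t' : Finset β} (htt' : Disjoint t t') :
    Disjoint (aboveIn r (aboveIn r 𝒜 t) t') (𝒜 ∩ t') := by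
  refine disjoint_left.2 fun Y hY hY𝒜 ↦ ?_
  obtain ⟨hYt', X, hX, hXY⟩ := mem_filter.1 hY
  obtain ⟨hXt, A, hA, hAX⟩ := mem_filter.1 hX
  obtain rfl : A = Y := by
    by_contra hne
    exact h𝒜 hA (mem_inter.1 hY𝒜).1 hne (trans_of r hAX hXY)
  obtain rfl : X = A := antisymm hXY hAX
  exact disjoint_left.1 htt' hXt hYt'

theorem sum_card_inter_div_le_card_aboveIn_div [Std.Refl r] [IsTrans β r] [Std.Antisymm r]
    (hs : Pairwise (Disjoint on s)) (hW : ∀ i ≤ k, 0 < W i)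
    (hlocal : ∀ i < k, ∀ F ⊆ s i, #F / W i ≤ #(aboveIn r F (s (i + 1))) / W (i + 1))
    (h𝒜 : IsAntichain r (𝒜 : Set β)) :
    ∀ i ≤ k, ∑ j ∈ range (i + 1), #(𝒜 ∩ s j) / W j ≤ #(aboveIn r 𝒜 (s i)) / W i := by
  intro i
  induction i with
  | zero =>
    intro h0
    simpa using div_le_div_of_nonneg_right
      (by exact_mod_cast card_le_card (inter_subset_aboveIn (s 0))) (hW 0 h0).le
  | succ i ih =>
    intro hi
    have hcard : #(aboveIn r (aboveIn r 𝒜 (s i)) (s (i + 1))) + #(𝒜 ∩ s (i + 1)) ≤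
        #(aboveIn r 𝒜 (s (i + 1))) := by
      rw [← card_union_of_disjoint
        (disjoint_aboveIn_aboveIn_inter h𝒜 (hs (Nat.succ_ne_self i).symm))]
      exact card_le_card (union_subset (aboveIn_aboveIn_subset _ _) (inter_subset_aboveIn _))
    have hWi := hW (i + 1) hi
    calc ∑ j ∈ range (i + 1 + 1), #(𝒜 ∩ s j) / W j
        ≤ #(aboveIn r 𝒜 (s i)) / W i + #(𝒜 ∩ s (i + 1)) / W (i + 1) := by
          rw [sum_range_succ]
          exact add_le_add (ih (by omega)) le_rfl
      _ ≤ #(aboveIn r (aboveIn r 𝒜 (s i)) (s (i + 1))) / W (i + 1) +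
            #(𝒜 ∩ s (i + 1)) / W (i + 1) :=
          add_le_add (hlocal i (by omega) _ (filter_subset _ _)) le_rfl
      _ ≤ #(aboveIn r 𝒜 (s (i + 1))) / W (i + 1) := by
          rw [← add_div]
          gcongr
          exact_mod_cast hcard

theorem sum_card_inter_div_le_one [Std.Refl r] [IsTrans β r] [Std.Antisymm r]
    (hs : Pairwise (Disjoint on s)) (hW : ∀ i ≤ k, 0 < W i)
    (hlocal : ∀ i < k, ∀ F ⊆ s i, #F / W i ≤ #(aboveIn r F (s (i + 1))) / W (i + 1))
    (htop : #(s k) ≤ W k) (h𝒜 : IsAntichain r (𝒜 : Set β)) :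
    ∑ i ∈ range (k + 1), #(𝒜 ∩ s i) / W i ≤ 1 := by
  refine (sum_card_inter_div_le_card_aboveIn_div hs hW hlocal h𝒜 k le_rfl).trans ?_
  rw [div_le_one (hW k le_rfl)]
  exact (Nat.cast_le.2 (card_le_card (filter_subset _ (s k)))).trans htop

theorem card_le_of_isAntichain [Std.Refl r] [IsTrans β r] [Std.Antisymm r]
    (hs : Pairwise (Disjoint on s)) (hW : ∀ i ≤ k, 0 < W i)
    (hlocal : ∀ i < k, ∀ F ⊆ s i, #F / W i ≤ #(aboveIn r F (s (i + 1))) / W (i + 1))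
    (htop : #(s k) ≤ W k) (h𝒜 : IsAntichain r (𝒜 : Set β))
    (hcover : ∀ A ∈ 𝒜, ∃ i ≤ k, A ∈ s i) {C : ℝ} (hC : ∀ i ≤ k, W i ≤ C) :
    (#𝒜 : ℝ) ≤ C := by
  have h𝒜eq : 𝒜 = (range (k + 1)).biUnion fun i ↦ 𝒜 ∩ s i := by
    ext A
    simp only [mem_biUnion, mem_range, mem_inter, Nat.lt_succ_iff]
    exact ⟨fun hA ↦ (hcover A hA).imp fun i hi ↦ ⟨hi.1, hA, hi.2⟩, fun ⟨_, _, hA, _⟩ ↦ hA⟩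
  have hcard : #𝒜 = ∑ i ∈ range (k + 1), #(𝒜 ∩ s i) := by
    rw [h𝒜eq, card_biUnion]
    · simp_rw [← h𝒜eq]
    · exact fun i _ j _ hij ↦ (hs hij).mono inter_subset_right inter_subset_right
  have hC0 : 0 ≤ C := (hW 0 (Nat.zero_le k)).le.trans (hC 0 (Nat.zero_le k))
  calc (#𝒜 : ℝ) = ∑ i ∈ range (k + 1), #(𝒜 ∩ s i) / W i * W i := by
        rw [hcard, Nat.cast_sum]
        refine sum_congr rfl fun i hi ↦ ?_
        rw [div_mul_cancel₀ _ (hW i (Nat.lt_succ_iff.1 (mem_range.1 hi))).ne']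
    _ ≤ ∑ i ∈ range (k + 1), #(𝒜 ∩ s i) / W i * C := by
        refine sum_le_sum fun i hi ↦ ?_
        have hi : i ≤ k := Nat.lt_succ_iff.1 (mem_range.1 hi)
        exact mul_le_mul_of_nonneg_left (hC i hi) (div_nonneg (Nat.cast_nonneg _) (hW i hi).le)
    _ ≤ 1 * C := by
        rw [← sum_mul]
        exact mul_le_mul_of_nonneg_right (sum_card_inter_div_le_one hs hW hlocal htop h𝒜) hC0
    _ = C := one_mul C

end GradedLYM

theorem choose_mul_choose_mul_eq (l h a b : ℕ) :
    l.choose (a + 1) * h.choose b * ((a + 1) * (h - b).choose 2) =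
      l.choose a * h.choose (b + 2) * ((l - a) * (b + 2).choose 2) := by
  have e : h.choose (b + 2) * (b + 2).choose 2 = h.choose b * (h - b).choose 2 := by
    rw [← Nat.choose_symm_add, Nat.choose_mul (Nat.le_add_right b 2), Nat.add_sub_cancel_left]
  calc l.choose (a + 1) * h.choose b * ((a + 1) * (h - b).choose 2)
      = l.choose (a + 1) * (a + 1) * (h.choose b * (h - b).choose 2) := by ring
    _ = l.choose a * (l - a) * (h.choose (b + 2) * (b + 2).choose 2) := by
        rw [Nat.choose_succ_right_eq, e]
    _ = _ := by ring

/-- The ratio `C(m, k + 1) / C(m, k) = (m - k) / (k + 1)` is at most `exp (-(2k + 1 - m) / (m + 1))`,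
which exactly compensates the growth `(k + 1 - m/2)² - (k - m/2)² = 2k + 1 - m` of the exponent. -/
theorem choose_succ_mul_exp_le {m k : ℕ} (hk : m ≤ 2 * k + 1) :
    (m.choose (k + 1) : ℝ) * exp ((((k + 1 : ℕ) : ℝ) - m / 2) ^ 2 / (m + 1)) ≤
      m.choose k * exp (((k : ℝ) - m / 2) ^ 2 / (m + 1)) := by
  rcases le_or_gt m k with hkm | hkm
  · rw [Nat.choose_eq_zero_of_lt (by omega), Nat.cast_zero, zero_mul]
    positivity
  have hkR : (m : ℝ) ≤ 2 * k + 1 := by exact_mod_cast hk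
  have hmk : (k : ℝ) + 1 ≤ m + 1 := by exact_mod_cast (by omega : k + 1 ≤ m + 1)
  set x : ℝ := 2 * k + 1 - m
  have hrec : (m.choose (k + 1) : ℝ) * (k + 1) = m.choose k * (m - k) := by
    rw [← Nat.cast_sub hkm.le]
    exact_mod_cast Nat.choose_succ_right_eq m k
  have hratio : (m : ℝ) - k ≤ (k + 1) * exp (-x / (m + 1)) := by
    have h₁ := add_one_le_exp (-x / (k + 1))
    have h₂ : -x / (k + 1) ≤ -x / (m + 1) := by
      rw [neg_div, neg_div, neg_le_neg_iff]
      exact div_le_div_of_nonneg_left (by linarith) (by positivity) hmk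
    have h₃ : (m : ℝ) - k = (k + 1) * (-x / (k + 1) + 1) := by
      field_simp
      ring
    rw [h₃]
    gcongr
    exact h₁.trans (exp_le_exp.2 h₂)
  have hstep : (m.choose (k + 1) : ℝ) ≤ m.choose k * exp (-x / (m + 1)) := by
    refine le_of_mul_le_mul_right ?_ (by positivity : (0 : ℝ) < k + 1)
    calc (m.choose (k + 1) : ℝ) * (k + 1) = m.choose k * (m - k) := hrec
      _ ≤ m.choose k * ((k + 1) * exp (-x / (m + 1))) := by gcongr
      _ = _ := by ring
  calc (m.choose (k + 1) : ℝ) * exp ((((k + 1 : ℕ) : ℝ) - m / 2) ^ 2 / (m + 1))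
      ≤ m.choose k * exp (-x / (m + 1)) * exp ((((k + 1 : ℕ) : ℝ) - m / 2) ^ 2 / (m + 1)) := by
        gcongr
    _ = m.choose k * exp (((k : ℝ) - m / 2) ^ 2 / (m + 1)) := by
        rw [mul_assoc, ← exp_add]
        congr 2
        push_cast
        ring

theorem choose_mul_exp_le (m k : ℕ) :
    (m.choose k : ℝ) * exp (((k : ℝ) - m / 2) ^ 2 / (m + 1)) ≤ exp (1 / 4) * m.choose (m / 2) := by
  set g : ℕ → ℝ := fun j ↦ m.choose j * exp (((j : ℝ) - m / 2) ^ 2 / (m + 1))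
  have hmono (j : ℕ) (hj : m / 2 ≤ j) : g j ≤ g (m / 2) := by
    induction j, hj using Nat.le_induction with
    | base => exact le_rfl
    | succ j hj ih => exact (choose_succ_mul_exp_le (by omega)).trans ih
  have hcenter : g (m / 2) ≤ exp (1 / 4) * m.choose (m / 2) := by
    have h₁ : (m : ℝ) ≤ 2 * ((m / 2 : ℕ) : ℝ) + 1 := by exact_mod_cast (by omega : m ≤ 2 * (m / 2) + 1)
    have h₂ : 2 * ((m / 2 : ℕ) : ℝ) ≤ m := by exact_mod_cast Nat.mul_div_le m 2
    have h₃ : (((m / 2 : ℕ) : ℝ) - m / 2) ^ 2 / (m + 1) ≤ 1 / 4 := by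
      rw [div_le_iff₀ (by positivity)]
      nlinarith [(Nat.cast_nonneg m : (0 : ℝ) ≤ m)]
    simp only [g]
    rw [mul_comm]
    gcongr
  rcases le_total (m / 2) k with hk | hk
  · exact (hmono k hk).trans hcenter
  · have hsymm : g k = g (m - k) := by
      simp only [g]
      rw [Nat.choose_symm (by omega), Nat.cast_sub (by omega)]
      congr 3
      ring
    exact (hsymm.trans_le (hmono (m - k) (by omega))).trans hcenter

theorem centralBinom_sq_mul_le (q : ℕ) : q.centralBinom ^ 2 * (3 * q + 1) ≤ 16 ^ q := by
  induction q with
  | zero => simp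
  | succ q ih =>
    have hpoly : 4 * (2 * q + 1) ^ 2 * (3 * q + 4) ≤ 16 * (q + 1) ^ 2 * (3 * q + 1) := by nlinarith
    refine Nat.le_of_mul_le_mul_left ?_ (by positivity : 0 < (q + 1) ^ 2)
    calc (q + 1) ^ 2 * ((q + 1).centralBinom ^ 2 * (3 * (q + 1) + 1))
        = ((q + 1) * (q + 1).centralBinom) ^ 2 * (3 * q + 4) := by ring
      _ = q.centralBinom ^ 2 * (4 * (2 * q + 1) ^ 2 * (3 * q + 4)) := by
          rw [Nat.succ_mul_centralBinom_succ]; ring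
      _ ≤ q.centralBinom ^ 2 * (16 * (q + 1) ^ 2 * (3 * q + 1)) := Nat.mul_le_mul_left _ hpoly
      _ = 16 * (q + 1) ^ 2 * (q.centralBinom ^ 2 * (3 * q + 1)) := by ring
      _ ≤ 16 * (q + 1) ^ 2 * 16 ^ q := Nat.mul_le_mul_left _ ih
      _ = (q + 1) ^ 2 * 16 ^ (q + 1) := by ring

theorem choose_half_sq_mul_le (m : ℕ) : m.choose (m / 2) ^ 2 * m ≤ 2 * 4 ^ m := by
  obtain ⟨q, rfl | rfl⟩ := Nat.even_or_odd' m
  · have h := centralBinom_sq_mul_le q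
    rw [Nat.centralBinom_eq_two_mul_choose] at h
    have h16 : 4 ^ (2 * q) = 16 ^ q := by rw [pow_mul]; norm_num
    rw [Nat.mul_div_cancel_left q two_pos, h16]
    nlinarith
  · have hodd : (2 * q + 1).choose q ≤ 2 * q.centralBinom := by
      refine Nat.le_of_mul_le_mul_right ?_ (Nat.succ_pos q)
      rw [← Nat.choose_symm_half, ← Nat.add_one_mul_choose_eq, Nat.centralBinom_eq_two_mul_choose]
      nlinarith
    have h := centralBinom_sq_mul_le q
    have h16 : 4 ^ (2 * q + 1) = 4 * 16 ^ q := by rw [pow_succ, pow_mul]; ring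
    rw [show (2 * q + 1) / 2 = q by omega, h16]
    calc (2 * q + 1).choose q ^ 2 * (2 * q + 1)
        ≤ (2 * q.centralBinom) ^ 2 * (3 * q + 1) := by gcongr; omega
      _ ≤ 2 * (4 * 16 ^ q) := by nlinarith

theorem add_sq_div_add_le {p q : ℝ} (hp : 0 < p) (hq : 0 < q) (x y : ℝ) :
    (x + y) ^ 2 / (p + q) ≤ x ^ 2 / p + y ^ 2 / q := by
  rw [div_add_div _ _ hp.ne' hq.ne', div_le_div_iff₀ (by positivity) (by positivity)]
  nlinarith [sq_nonneg (x * q - y * p), mul_pos hp hq]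

theorem choose_mul_choose_le (l h a b : ℕ) :
    ((l.choose a * h.choose b : ℕ) : ℝ) ≤ exp (1 / 2) * (l.choose (l / 2) * h.choose (h / 2) : ℕ) *
      exp (-(((2 * a + b : ℕ) : ℝ) - (l + h / 2)) ^ 2 / (4 * l + h + 5)) := by
  have hl := choose_mul_exp_le l a
  have hh := choose_mul_exp_le h b
  have hexp : ((((2 * a + b : ℕ) : ℝ) - (l + h / 2)) ^ 2 / (4 * l + h + 5)) ≤
      ((a : ℝ) - l / 2) ^ 2 / (l + 1) + ((b : ℝ) - h / 2) ^ 2 / (h + 1) := by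
    have := add_sq_div_add_le (by positivity : (0 : ℝ) < 4 * (l + 1)) (by positivity : (0 : ℝ) < h + 1)
      (2 * ((a : ℝ) - l / 2)) ((b : ℝ) - h / 2)
    convert this using 2
    · push_cast; ring
    · ring
    · rw [mul_pow, mul_div_mul_comm]; norm_num
  rw [neg_div, exp_neg, ← div_eq_mul_inv, le_div_iff₀ (exp_pos _)]
  calc ((l.choose a * h.choose b : ℕ) : ℝ) *
        exp ((((2 * a + b : ℕ) : ℝ) - (l + h / 2)) ^ 2 / (4 * l + h + 5))
      ≤ (l.choose a * exp (((a : ℝ) - l / 2) ^ 2 / (l + 1))) *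
          (h.choose b * exp (((b : ℝ) - h / 2) ^ 2 / (h + 1))) := by
        rw [Nat.cast_mul, mul_mul_mul_comm, ← exp_add]
        gcongr
    _ ≤ (exp (1 / 4) * l.choose (l / 2)) * (exp (1 / 4) * h.choose (h / 2)) := by gcongr
    _ = exp (1 / 2) * (l.choose (l / 2) * h.choose (h / 2) : ℕ) := by
        rw [Nat.cast_mul, mul_mul_mul_comm, ← exp_add]; norm_num

theorem sum_range_pow_dist_le {r : ℝ} (hr₀ : 0 ≤ r) (hr₁ : r < 1) (K m : ℕ) :
    ∑ c ∈ range K, r ^ Nat.dist c m ≤ 2 / (1 - r) := by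
  have hgeom (N : ℕ) : ∑ j ∈ range N, r ^ j ≤ 1 / (1 - r) := by
    have := geom_sum_Ico_le_of_lt_one (m := 0) (n := N) hr₀ hr₁
    rwa [← range_eq_Ico, pow_zero] at this
  calc ∑ c ∈ range K, r ^ Nat.dist c m
      ≤ ∑ c ∈ range (m + K), r ^ Nat.dist c m :=
        sum_le_sum_of_subset_of_nonneg (range_subset_range.2 (by omega))
          fun _ _ _ ↦ pow_nonneg hr₀ _
    _ = ∑ j ∈ range m, r ^ (j + 1) + ∑ j ∈ range K, r ^ j := by
        rw [← sum_range_add_sum_Ico _ (Nat.le_add_right m K), ← sum_range_reflect,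
          sum_Ico_eq_sum_range, Nat.add_sub_cancel_left]
        congr 1 <;> refine sum_congr rfl fun j hj ↦ ?_ <;> rw [mem_range] at hj <;>
          simp only [Nat.dist] <;> congr 1 <;> omega
    _ ≤ 1 / (1 - r) + 1 / (1 - r) := by
        gcongr
        · exact (sum_le_sum fun j _ ↦ pow_le_pow_of_le_one hr₀ hr₁.le (Nat.le_succ j)).trans
            (hgeom m)
        · exact hgeom K
    _ = 2 / (1 - r) := by ring

theorem sum_range_exp_neg_sq_div_le (K : ℕ) (μ : ℝ) {M : ℝ} (hM : 1 ≤ M) :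
    ∑ c ∈ range K, exp (-((c : ℝ) - μ) ^ 2 / M) ≤ 4 * exp 2 * √M := by
  set s := √M
  have hs : 1 ≤ s := one_le_sqrt.2 hM
  have hsM : s ^ 2 = M := sq_sqrt (by linarith)
  set r := exp (-(1 / s))
  have hr₁ : r < 1 := by
    rw [← exp_zero]
    exact exp_lt_exp.2 (by simp only [neg_lt_zero]; positivity)
  have hrs : r * (s + 1) ≤ s := by
    have h := add_one_le_exp (1 / s)
    have hr : r * exp (1 / s) = 1 := by rw [← exp_add, neg_add_cancel, exp_zero]
    have : r * (1 / s + 1) ≤ 1 :=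
      (mul_le_mul_of_nonneg_left h (exp_pos (-(1 / s))).le).trans_eq hr
    field_simp at this
    linarith
  -- `exp (-d² / M) ≤ exp (1 - |d| / √M)`, and `|c - μ|` is within `1` of the distance from `c` to
  -- `⌊μ⌋₊`: this reduces the sum to two geometric series.
  have hterm (c : ℕ) : exp (-((c : ℝ) - μ) ^ 2 / M) ≤ exp 2 * r ^ Nat.dist c ⌊μ⌋₊ := by
    have hdist : (Nat.dist c ⌊μ⌋₊ : ℝ) ≤ |(c : ℝ) - μ| + 1 := by
      rcases le_total c ⌊μ⌋₊ with hc | hc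
      · rw [Nat.dist_eq_sub_of_le hc, Nat.cast_sub hc]
        rcases le_total 0 μ with hμ | hμ
        · linarith [Nat.floor_le hμ, neg_abs_le ((c : ℝ) - μ)]
        · rw [Nat.floor_of_nonpos hμ, Nat.cast_zero]
          linarith [abs_nonneg ((c : ℝ) - μ), (Nat.cast_nonneg c : (0 : ℝ) ≤ c)]
      · rw [Nat.dist_eq_sub_of_le_right hc, Nat.cast_sub hc]
        linarith [Nat.lt_floor_add_one μ, le_abs_self ((c : ℝ) - μ)]
    set t := |(c : ℝ) - μ| / s
    have ht : ((c : ℝ) - μ) ^ 2 / M = t ^ 2 := by rw [div_pow, sq_abs, hsM]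
    have hdist' : (Nat.dist c ⌊μ⌋₊ : ℝ) / s ≤ t + 1 := by
      rw [div_le_iff₀ (by linarith), add_mul, div_mul_cancel₀ _ (by positivity)]
      linarith
    rw [← exp_nat_mul, ← exp_add, neg_div, ht, mul_neg, mul_one_div]
    exact exp_le_exp.2 (by nlinarith [sq_nonneg (t - 1 / 2)])
  calc ∑ c ∈ range K, exp (-((c : ℝ) - μ) ^ 2 / M)
      ≤ ∑ c ∈ range K, exp 2 * r ^ Nat.dist c ⌊μ⌋₊ := sum_le_sum fun c _ ↦ hterm c
    _ ≤ exp 2 * (2 / (1 - r)) := by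
        rw [← mul_sum]
        gcongr
        exact sum_range_pow_dist_le (exp_pos _).le hr₁ K _
    _ ≤ exp 2 * (2 * (s + 1)) := by
        gcongr
        rw [div_le_iff₀ (by linarith)]
        nlinarith
    _ ≤ 4 * exp 2 * s := by nlinarith [exp_pos 2]

section Tilted

variable {α : Type*} [DecidableEq α] (L : Finset α)

def TiltedLE (A B : Finset α) : Prop := B ∩ L ⊆ A ∩ L ∧ A \ L ⊆ B \ L

def tiltedRank (X : Finset α) : ℕ := 2 * #(X ∩ L) + #(X \ L)

def IsTiltedAntichain (𝒜 : Finset (Finset α)) : Prop :=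
  ∀ A ∈ 𝒜, ∀ B ∈ 𝒜, TiltedLE L A B → tiltedRank L A = tiltedRank L B → A = B

def IsTiltedPair [LT α] (A B : Finset α) : Prop :=
  #(B \ A) = 2 * #(A \ B) ∧ (A \ B).Nonempty ∧ ∀ a ∈ A \ B, ∀ b ∈ B \ A, a < b

instance : DecidableRel (TiltedLE L) := fun _ _ ↦ inferInstanceAs (Decidable (_ ∧ _))

variable {L}

theorem eq_of_inter_eq_of_sdiff_eq {A B : Finset α} (h₁ : A ∩ L = B ∩ L) (h₂ : A \ L = B \ L) :
    A = B := by
  rw [← sdiff_union_inter A L, ← sdiff_union_inter B L, h₁, h₂]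

theorem union_inter_eq_of_subset_of_disjoint {P Q : Finset α} (hP : P ⊆ L) (hQ : Disjoint Q L) :
    (P ∪ Q) ∩ L = P := by
  rw [union_inter_distrib_right, inter_eq_left.2 hP, disjoint_iff_inter_eq_empty.1 hQ, union_empty]

theorem union_sdiff_eq_of_subset_of_disjoint {P Q : Finset α} (hP : P ⊆ L) (hQ : Disjoint Q L) :
    (P ∪ Q) \ L = Q := by
  rw [union_sdiff_distrib, sdiff_eq_empty_iff_subset.2 hP, hQ.sdiff_eq_left, empty_union]

instance : Std.Refl (TiltedLE L) := ⟨fun _ ↦ ⟨subset_rfl, subset_rfl⟩⟩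

instance : IsTrans (Finset α) (TiltedLE L) :=
  ⟨fun _ _ _ h₁ h₂ ↦ ⟨h₂.1.trans h₁.1, h₁.2.trans h₂.2⟩⟩

instance : Std.Antisymm (TiltedLE L) :=
  ⟨fun _ _ h₁ h₂ ↦ eq_of_inter_eq_of_sdiff_eq (h₂.1.antisymm h₁.1) (h₁.2.antisymm h₂.2)⟩

namespace TiltedLE

variable {A B : Finset α}

theorem sdiff_eq_left (h : TiltedLE L A B) : A \ B = (A ∩ L) \ (B ∩ L) := by
  ext x
  have := @h.2 x
  simp only [mem_sdiff, mem_inter] at this ⊢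
  tauto

theorem sdiff_eq_right (h : TiltedLE L A B) : B \ A = (B \ L) \ (A \ L) := by
  ext x
  have := @h.1 x
  simp only [mem_sdiff, mem_inter] at this ⊢
  tauto

theorem card_sdiff_left (h : TiltedLE L A B) : #(A \ B) = #(A ∩ L) - #(B ∩ L) := by
  rw [h.sdiff_eq_left, card_sdiff_of_subset h.1]

theorem card_sdiff_right (h : TiltedLE L A B) : #(B \ A) = #(B \ L) - #(A \ L) := by
  rw [h.sdiff_eq_right, card_sdiff_of_subset h.2]

end TiltedLE

theorem TiltedLE.isTiltedPair [LinearOrder α] (hL : ∀ x ∈ L, ∀ y ∉ L, x < y) {A B : Finset α}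
    (h : TiltedLE L A B) (hrank : tiltedRank L A = tiltedRank L B) (hne : A ≠ B) :
    IsTiltedPair A B := by
  have h₁ : #(B ∩ L) ≤ #(A ∩ L) := card_le_card h.1
  have h₂ : #(A \ L) ≤ #(B \ L) := card_le_card h.2
  have hcard : #(B \ A) = 2 * #(A \ B) := by
    rw [h.card_sdiff_left, h.card_sdiff_right]
    simp only [tiltedRank] at hrank
    omega
  refine ⟨hcard, nonempty_iff_ne_empty.2 fun hAB ↦ hne ?_, fun a ha b hb ↦ ?_⟩
  · rw [hAB, card_empty, mul_zero, card_eq_zero] at hcard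
    exact (sdiff_eq_empty_iff_subset.1 hAB).antisymm (sdiff_eq_empty_iff_subset.1 hcard)
  · rw [h.sdiff_eq_left] at ha
    rw [h.sdiff_eq_right] at hb
    exact hL a (mem_inter.1 (mem_sdiff.1 ha).1).2 b (mem_sdiff.1 (mem_sdiff.1 hb).1).2

variable [Fintype α]

variable (L) in
def tiltedLevel (a b : ℕ) : Finset (Finset α) := {X | #(X ∩ L) = a ∧ #(X \ L) = b}

theorem mem_tiltedLevel {X : Finset α} {a b : ℕ} :
    X ∈ tiltedLevel L a b ↔ #(X ∩ L) = a ∧ #(X \ L) = b := by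
  simp [tiltedLevel]

theorem sdiff_subset_compl (X : Finset α) : X \ L ⊆ Lᶜ := fun _ hx ↦ mem_compl.2 (mem_sdiff.1 hx).2

theorem card_tiltedLevel_le (a b : ℕ) : #(tiltedLevel L a b) ≤ (#L).choose a * (#Lᶜ).choose b := by
  rw [← card_powersetCard, ← card_powersetCard, ← card_product]
  refine card_le_card_of_injOn (fun X ↦ (X ∩ L, X \ L)) (fun X hX ↦ ?_)
    fun X _ Y _ hXY ↦ eq_of_inter_eq_of_sdiff_eq (congrArg Prod.fst hXY) (congrArg Prod.snd hXY)
  rw [mem_coe, mem_tiltedLevel] at hX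
  simp only [mem_coe, mem_product, mem_powersetCard]
  exact ⟨⟨inter_subset_right, hX.1⟩, sdiff_subset_compl X, hX.2⟩

theorem le_card_filter_tiltedLE {X : Finset α} {a b : ℕ} (hX : X ∈ tiltedLevel L (a + 1) b) :
    (a + 1) * (#Lᶜ - b).choose 2 ≤ #{Y ∈ tiltedLevel L a (b + 2) | TiltedLE L X Y} := by
  rw [mem_tiltedLevel] at hX
  have hcompl : #(Lᶜ \ X) = #Lᶜ - b := by rw [card_sdiff, ← sdiff_eq_inter_compl, hX.2]
  set D := (X ∩ L).powersetCard a ×ˢ (Lᶜ \ X).powersetCard 2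
  have hparts (q : Finset α × Finset α) (hq : q ∈ D) :
      (q.1 ∪ (X \ L ∪ q.2)) ∩ L = q.1 ∧ (q.1 ∪ (X \ L ∪ q.2)) \ L = X \ L ∪ q.2 ∧
        Disjoint (X \ L) q.2 := by
    simp only [D, mem_product, mem_powersetCard] at hq
    have hP : q.1 ⊆ L := hq.1.1.trans inter_subset_right
    have hQ : Disjoint (X \ L ∪ q.2) L := disjoint_union_left.2
      ⟨sdiff_disjoint, disjoint_left.2 fun x hx ↦ mem_compl.1 (mem_sdiff.1 (hq.2.1 hx)).1⟩
    exact ⟨union_inter_eq_of_subset_of_disjoint hP hQ, union_sdiff_eq_of_subset_of_disjoint hP hQ,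
      disjoint_right.2 fun x hx hxX ↦ (mem_sdiff.1 (hq.2.1 hx)).2 (mem_sdiff.1 hxX).1⟩
  calc (a + 1) * (#Lᶜ - b).choose 2 = #D := by
        rw [card_product, card_powersetCard, card_powersetCard, hX.1, hcompl,
          Nat.choose_succ_self_right]
    _ ≤ _ := by
      refine card_le_card_of_injOn (fun q ↦ q.1 ∪ (X \ L ∪ q.2)) (fun q hq ↦ ?_)
        fun q hq q' hq' hqq' ↦ ?_
      · obtain ⟨h₁, h₂, hdisj⟩ := hparts q hq
        simp only [D, mem_coe, mem_product, mem_powersetCard] at hq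
        refine mem_filter.2 ⟨mem_tiltedLevel.2 ⟨?_, ?_⟩, ?_, ?_⟩
        · rw [h₁, hq.1.2]
        · rw [h₂, card_union_of_disjoint hdisj, hX.2, hq.2.2]
        · exact h₁ ▸ hq.1.1
        · exact h₂ ▸ subset_union_left
      · obtain ⟨h₁, h₂, hdisj⟩ := hparts q hq
        obtain ⟨h₁', h₂', hdisj'⟩ := hparts q' hq'
        dsimp only at hqq'
        refine Prod.ext (h₁.symm.trans (hqq' ▸ h₁')) ?_
        rw [← union_sdiff_cancel_left hdisj, ← h₂, hqq', h₂', union_sdiff_cancel_left hdisj']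

theorem card_filter_tiltedLE_le {Y : Finset α} {a b : ℕ} (hY : Y ∈ tiltedLevel L a (b + 2)) :
    #{X ∈ tiltedLevel L (a + 1) b | TiltedLE L X Y} ≤ (#L - a) * (b + 2).choose 2 := by
  rw [mem_tiltedLevel] at hY
  have hLY : #(L \ Y) = #L - a := by rw [card_sdiff, hY.1]
  calc #{X ∈ tiltedLevel L (a + 1) b | TiltedLE L X Y}
      ≤ #((L \ Y).powersetCard 1 ×ˢ (Y \ L).powersetCard 2) := by
        refine card_le_card_of_injOn (fun X ↦ (X \ Y, Y \ X)) (fun X hX ↦ ?_) ?_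
        · rw [mem_coe, mem_filter, mem_tiltedLevel] at hX
          obtain ⟨⟨hXa, hXb⟩, hXY⟩ := hX
          simp only [mem_coe, mem_product, mem_powersetCard, hXY.card_sdiff_left,
            hXY.card_sdiff_right, hXa, hXb, hY.1, hY.2]
          refine ⟨⟨fun x hx ↦ ?_, by omega⟩, fun x hx ↦ ?_, by omega⟩
          · rw [hXY.sdiff_eq_left] at hx
            simp only [mem_sdiff, mem_inter] at hx ⊢
            tauto
          · rw [hXY.sdiff_eq_right] at hx
            exact (mem_sdiff.1 hx).1
        · intro X _ X' _ hXX'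
          have h₁ := Finset.ext_iff.1 (congrArg Prod.fst hXX')
          have h₂ := Finset.ext_iff.1 (congrArg Prod.snd hXX')
          ext x
          simp only [mem_sdiff] at h₁ h₂
          by_cases hx : x ∈ Y
          · have := h₂ x; tauto
          · have := h₁ x; tauto
    _ = (#L - a) * (b + 2).choose 2 := by
        rw [card_product, card_powersetCard, card_powersetCard, hLY, hY.2, Nat.choose_one_right]

theorem tiltedLevel_local_lym {a b : ℕ} (ha : a + 1 ≤ #L) (hb : b + 2 ≤ #Lᶜ)
    {F : Finset (Finset α)} (hF : F ⊆ tiltedLevel L (a + 1) b) :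
    (#F : ℝ) / ((#L).choose (a + 1) * (#Lᶜ).choose b : ℕ) ≤
      #(aboveIn (TiltedLE L) F (tiltedLevel L a (b + 2))) /
        ((#L).choose a * (#Lᶜ).choose (b + 2) : ℕ) := by
  set N := aboveIn (TiltedLE L) F (tiltedLevel L a (b + 2))
  have hu : 0 < (#L - a) * (b + 2).choose 2 :=
    Nat.mul_pos (by omega) (Nat.choose_pos (by omega))
  have hcount : #F * ((a + 1) * (#Lᶜ - b).choose 2) ≤ #N * ((#L - a) * (b + 2).choose 2) := by
    refine card_mul_le_card_mul (TiltedLE L) (fun X hX ↦ ?_) fun Y hY ↦ ?_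
    · refine (le_card_filter_tiltedLE (hF hX)).trans (card_le_card fun Y hY ↦ ?_)
      obtain ⟨hY, hXY⟩ := mem_filter.1 hY
      exact mem_filter.2 ⟨mem_filter.2 ⟨hY, X, hX, hXY⟩, hXY⟩
    · refine (card_le_card fun X hX ↦ ?_).trans (card_filter_tiltedLE_le (mem_filter.1 hY).1)
      obtain ⟨hX, hXY⟩ := mem_filter.1 hX
      exact mem_filter.2 ⟨hF hX, hXY⟩
  have hcross : #F * ((#L).choose a * (#Lᶜ).choose (b + 2)) ≤
      #N * ((#L).choose (a + 1) * (#Lᶜ).choose b) := by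
    refine Nat.le_of_mul_le_mul_right ?_ hu
    calc #F * ((#L).choose a * (#Lᶜ).choose (b + 2)) * ((#L - a) * (b + 2).choose 2)
        = #F * ((a + 1) * (#Lᶜ - b).choose 2) * ((#L).choose (a + 1) * (#Lᶜ).choose b) := by
          rw [mul_assoc, ← choose_mul_choose_mul_eq]; ring
      _ ≤ #N * ((#L - a) * (b + 2).choose 2) * ((#L).choose (a + 1) * (#Lᶜ).choose b) :=
          Nat.mul_le_mul_right _ hcount
      _ = _ := by ring
  rw [div_le_div_iff₀ (by exact_mod_cast Nat.mul_pos (Nat.choose_pos ha) (Nat.choose_pos (by omega)))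
    (by exact_mod_cast Nat.mul_pos (Nat.choose_pos (by omega)) (Nat.choose_pos hb))]
  exact_mod_cast hcross

theorem card_le_of_isAntichain_of_forall_tiltedRank_eq {𝒜 : Finset (Finset α)}
    (h𝒜 : IsAntichain (TiltedLE L) (𝒜 : Set (Finset α))) {c : ℕ}
    (hrank : ∀ A ∈ 𝒜, tiltedRank L A = c) {C : ℝ} (hC0 : 0 ≤ C)
    (hC : ∀ a ≤ #L, ∀ b ≤ #Lᶜ, 2 * a + b = c → (((#L).choose a * (#Lᶜ).choose b : ℕ) : ℝ) ≤ C) :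
    (#𝒜 : ℝ) ≤ C := by
  obtain rfl | ⟨A₁, hA₁⟩ := 𝒜.eq_empty_or_nonempty
  · simpa using hC0
  have hbounds (A : Finset α) : #(A ∩ L) ≤ #L ∧ #(A \ L) ≤ #Lᶜ :=
    ⟨card_le_card inter_subset_right, card_le_card (sdiff_subset_compl A)⟩
  set a₀ := min #L (c / 2)
  set b₀ := c - 2 * a₀
  have hb₀ : b₀ ≤ #Lᶜ := by
    have := hrank A₁ hA₁
    have := hbounds A₁
    simp only [tiltedRank] at *
    omega
  set k := min a₀ ((#Lᶜ - b₀) / 2)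
  -- The levels of rank `c` are `(a₀ - i, b₀ + 2 i)` for `i ≤ k`, `a₀` being the largest `|X ∩ L|`.
  refine card_le_of_isAntichain (s := fun i ↦ tiltedLevel L (a₀ - i) (b₀ + 2 * i))
    (W := fun i ↦ (((#L).choose (a₀ - i) * (#Lᶜ).choose (b₀ + 2 * i) : ℕ) : ℝ)) (k := k)
    (fun i j hij ↦ disjoint_left.2 fun X hXi hXj ↦ hij ?_) (fun i hi ↦ ?_) (fun i hi F hF ↦ ?_)
    (by exact_mod_cast card_tiltedLevel_le _ _) h𝒜 (fun A hA ↦ ?_) (fun i hi ↦ ?_)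
  · have := (mem_tiltedLevel.1 hXi).2.symm.trans (mem_tiltedLevel.1 hXj).2
    omega
  · exact_mod_cast Nat.mul_pos (Nat.choose_pos (by omega)) (Nat.choose_pos (by omega))
  · have e₁ : a₀ - i = a₀ - (i + 1) + 1 := by omega
    have e₂ : b₀ + 2 * (i + 1) = b₀ + 2 * i + 2 := by ring
    rw [e₁] at hF ⊢
    rw [e₂]
    exact tiltedLevel_local_lym (by omega) (by omega) hF
  · have := hrank A hA
    have := hbounds A
    simp only [tiltedRank] at *
    refine ⟨a₀ - #(A ∩ L), by omega, mem_tiltedLevel.2 ⟨by omega, by omega⟩⟩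
  · exact hC _ (by omega) _ (by omega) (by omega)

theorem IsTiltedAntichain.card_le_sum {𝒜 : Finset (Finset α)} (h𝒜 : IsTiltedAntichain L 𝒜)
    {g : ℕ → ℝ} (hg0 : ∀ c, 0 ≤ g c)
    (hg : ∀ a ≤ #L, ∀ b ≤ #Lᶜ, (((#L).choose a * (#Lᶜ).choose b : ℕ) : ℝ) ≤ g (2 * a + b)) :
    (#𝒜 : ℝ) ≤ ∑ c ∈ range (2 * #L + #Lᶜ + 1), g c := by
  rw [card_eq_sum_card_fiberwise (f := tiltedRank L) (t := range (2 * #L + #Lᶜ + 1)) fun A _ ↦ ?_,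
    Nat.cast_sum]
  · refine sum_le_sum fun c _ ↦ card_le_of_isAntichain_of_forall_tiltedRank_eq (c := c) ?_
      (fun A hA ↦ (mem_filter.1 hA).2) (hg0 c) fun a ha b hb hc ↦ hc ▸ hg a ha b hb
    intro A hA A' hA' hne hAA'
    rw [coe_filter] at hA hA'
    exact hne (h𝒜 A hA.1 A' hA'.1 hAA' (hA.2.trans hA'.2.symm))
  · have h₁ : #(A ∩ L) ≤ #L := card_le_card inter_subset_right
    have h₂ : #(A \ L) ≤ #Lᶜ := card_le_card (sdiff_subset_compl A)
    simp only [coe_range, Set.mem_Iio, tiltedRank]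
    omega

theorem IsTiltedAntichain.card_le {𝒜 : Finset (Finset α)} (h𝒜 : IsTiltedAntichain L 𝒜) :
    (#𝒜 : ℝ) ≤ 4 * exp (5 / 2) * ((#L).choose (#L / 2) * (#Lᶜ).choose (#Lᶜ / 2) : ℕ) *
      √(4 * #L + #Lᶜ + 5) := by
  set P : ℝ := (((#L).choose (#L / 2) * (#Lᶜ).choose (#Lᶜ / 2) : ℕ) : ℝ)
  calc (#𝒜 : ℝ)
      ≤ ∑ c ∈ range (2 * #L + #Lᶜ + 1),
          exp (1 / 2) * P * exp (-((c : ℝ) - (#L + #Lᶜ / 2)) ^ 2 / (4 * #L + #Lᶜ + 5)) :=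
        h𝒜.card_le_sum (fun _ ↦ by positivity)
          fun a _ b _ ↦ choose_mul_choose_le _ _ a b
    _ ≤ exp (1 / 2) * P * (4 * exp 2 * √(4 * #L + #Lᶜ + 5)) := by
        rw [← mul_sum]
        gcongr
        exact sum_range_exp_neg_sq_div_le _ _ (by linarith [(Nat.cast_nonneg _ : (0 : ℝ) ≤ #L)])
    _ = 4 * exp (5 / 2) * P * √(4 * #L + #Lᶜ + 5) := by
        rw [show (5 / 2 : ℝ) = 1 / 2 + 2 by norm_num, exp_add]
        ring

end Tilted

theorem choose_half_mul_sqrt_le {n : ℕ} (hn : 2 ≤ n) :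
    (((n / 2).choose (n / 2 / 2) * (n - n / 2).choose ((n - n / 2) / 2) : ℕ) : ℝ) *
      √(4 * (n / 2 : ℕ) + (n - n / 2 : ℕ) + 5) ≤ 14 * 2 ^ n / √n := by
  set l := n / 2
  set h := n - n / 2
  set P := l.choose (l / 2) * h.choose (h / 2)
  have hP : P ^ 2 * (l * h) ≤ 4 * 4 ^ n := by
    have := Nat.mul_le_mul (choose_half_sq_mul_le l) (choose_half_sq_mul_le h)
    calc P ^ 2 * (l * h) = l.choose (l / 2) ^ 2 * l * (h.choose (h / 2) ^ 2 * h) := by ring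
      _ ≤ 2 * 4 ^ l * (2 * 4 ^ h) := this
      _ = 4 * 4 ^ n := by rw [← show l + h = n by omega, pow_add]; ring
  have hM : (4 * l + h + 5) * n ≤ 48 * (l * h) := by
    obtain ⟨q, rfl | rfl⟩ := Nat.even_or_odd' n
    · rw [show l = q by omega, show h = q by omega]
      nlinarith
    · rw [show l = q by omega, show h = q + 1 by omega]
      nlinarith
  have key : P ^ 2 * (4 * l + h + 5) * n ≤ 196 * 4 ^ n := by
    calc P ^ 2 * (4 * l + h + 5) * n = P ^ 2 * ((4 * l + h + 5) * n) := by ring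
      _ ≤ P ^ 2 * (48 * (l * h)) := Nat.mul_le_mul_left _ hM
      _ = 48 * (P ^ 2 * (l * h)) := by ring
      _ ≤ 196 * 4 ^ n := by omega
  have hkey : ((P : ℝ) * √(4 * l + h + 5) * √n) ^ 2 ≤ (14 * 2 ^ n) ^ 2 :=
    calc ((P : ℝ) * √(4 * l + h + 5) * √n) ^ 2 = P ^ 2 * (4 * l + h + 5) * n := by
          rw [mul_pow, mul_pow, sq_sqrt (by positivity), sq_sqrt (by positivity)]
      _ ≤ 196 * 4 ^ n := by exact_mod_cast key
      _ = (14 * 2 ^ n) ^ 2 := by rw [mul_pow, ← pow_mul, mul_comm n, pow_mul]; norm_num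
  rw [le_div_iff₀ (sqrt_pos.2 (by exact_mod_cast (by omega : 0 < n)))]
  exact (pow_le_pow_iff_left₀ (by positivity) (by positivity) two_ne_zero).1 hkey

theorem card_le_of_forall_not_isTiltedPair {n : ℕ} (hn : 2 ≤ n) {𝒜 : Finset (Finset (Fin n))}
    (h𝒜 : ∀ A ∈ 𝒜, ∀ B ∈ 𝒜, ¬ IsTiltedPair A B) :
    (#𝒜 : ℝ) ≤ 56 * exp (5 / 2) * 2 ^ n / √n := by
  set L : Finset (Fin n) := {i | (i : ℕ) < n / 2}
  have hL : #L = n / 2 := by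
    rw [Fin.card_filter_val_lt]
    omega
  have hLc : #Lᶜ = n - n / 2 := by rw [card_compl, Fintype.card_fin, hL]
  have hsep : ∀ x ∈ L, ∀ y ∉ L, x < y := fun x hx y hy ↦ by
    simp only [L, mem_filter, mem_univ, true_and] at hx hy
    exact Fin.lt_def.2 (by omega)
  have h𝒜' : IsTiltedAntichain L 𝒜 := fun A hA B hB hAB hrank ↦
    by_contra fun hne ↦ h𝒜 A hA B hB (hAB.isTiltedPair hsep hrank hne)
  have h := h𝒜'.card_le
  rw [hL, hLc] at h
  calc (#𝒜 : ℝ) ≤ _ := h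
    _ ≤ 4 * exp (5 / 2) * (14 * 2 ^ n / √n) := by
        rw [mul_assoc]
        gcongr
        exact choose_half_mul_sqrt_le hn
    _ = 56 * exp (5 / 2) * 2 ^ n / √n := by ring

theorem stmt_11 :
    ∃ C : ℝ, 0 < C ∧ ∀ n : ℕ, 1 ≤ n → ∀ 𝒜 : Finset (Finset (Fin n)),
      (∀ A ∈ 𝒜, ∀ B ∈ 𝒜,
        ¬ ((B \ A).card = 2 * (A \ B).card ∧ (A \ B).Nonempty ∧
            ∀ a ∈ A \ B, ∀ b ∈ B \ A, a < b)) →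
      (𝒜.card : ℝ) ≤
        C * Real.exp (120 * Real.sqrt (Real.log n)) * 2 ^ n / Real.sqrt n := by
  refine ⟨56 * exp (5 / 2), by positivity, fun n hn 𝒜 h𝒜 ↦ ?_⟩
  have hbound : (#𝒜 : ℝ) ≤ 56 * exp (5 / 2) * 2 ^ n / √n := by
    obtain rfl | hn := (show n = 1 ∨ 2 ≤ n by omega)
    · have h𝒜 : (#𝒜 : ℝ) ≤ 2 := by exact_mod_cast card_le_univ 𝒜 |>.trans (by simp)
      rw [Nat.cast_one, sqrt_one, div_one, pow_one]
      linarith [one_le_exp (by norm_num : (0 : ℝ) ≤ 5 / 2)]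
    · exact card_le_of_forall_not_isTiltedPair hn h𝒜
  refine hbound.trans ?_
  gcongr ?_ * _ / _
  exact le_mul_of_one_le_right (by positivity) (one_le_exp (by positivity))
end

section
/- Let n = 3m, identify subsets of {1,...,n} with {0,1}^n, and let f : {0,1}^n → {0,...,7}^m be given by f(x)_i = x_i + 2x_{i+m} + 4x_{i+2m}. If L = {L₀,...,L₇} is a combinatorial line in {0,...,7}^m (with L_r the point whose active coordinates equal r), and A, B ⊆ {1,...,n} satisfy f(A) = L₁ and f(B) = L₆, then |B \ A| = 2|A \ B|, A \ B is nonempty, every element of A \ B lies in {1,...,m}, and every element of B \ A lies in {m+1,...,3m}; in particular a < b for all a ∈ A \ B, b ∈ B \ A. -/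
/-!
Write `finProdFinEquiv (k, i) = i + m k`, so that coordinate `i` of `f(S)` has binary digits
`[i + m k ∈ S]`, `k = 0, 1, 2`. On a passive coordinate `A` and `B` carry the same value, hence
agree in all three positions; on an active one they carry `1 = 001₂` and `6 = 110₂`. So `A \ B`
is the digit-0 copy of the set `W` of active coordinates and `B \ A` the digit-1 and digit-2
copies, which gives all the claims at once.
-/

open Finset

section
variable {m : ℕ}

theorem finProdFinEquiv_mem_iff_testBit (S : Finset (Fin (3 * m))) {i : Fin m} {d : ℕ}
    {p₀ p₁ p₂ : Fin (3 * m)} (hp₀ : (p₀ : ℕ) = i) (hp₁ : (p₁ : ℕ) = i + m)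
    (hp₂ : (p₂ : ℕ) = i + 2 * m)
    (h : ((if p₀ ∈ S then 1 else 0) + 2 * (if p₁ ∈ S then 1 else 0) +
      4 * (if p₂ ∈ S then 1 else 0)) = d)
    (k : Fin 3) : finProdFinEquiv (k, i) ∈ S ↔ d.testBit k := by
  subst h
  match k with
  | 0 =>
    rw [show finProdFinEquiv (0, i) = p₀ by ext; simp [hp₀]]
    split_ifs <;> simp [*, Nat.testBit]
  | 1 =>
    rw [show finProdFinEquiv (1, i) = p₁ by ext; simp [hp₁]]
    split_ifs <;> simp [*, Nat.testBit]
  | 2 =>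
    rw [show finProdFinEquiv (2, i) = p₂ by ext; simp [hp₂]; ring]
    split_ifs <;> simp [*, Nat.testBit]

variable {c : Fin m → Option (Fin 8)} {a b : Fin 8} {A B : Finset (Fin (3 * m))}

theorem finProdFinEquiv_mem_sdiff_iff
    (hA : ∀ k i, finProdFinEquiv (k, i) ∈ A ↔ ((c i).getD a : ℕ).testBit k)
    (hB : ∀ k i, finProdFinEquiv (k, i) ∈ B ↔ ((c i).getD b : ℕ).testBit k) (k : Fin 3)
    (i : Fin m) :
    finProdFinEquiv (k, i) ∈ A \ B ↔ ((a : ℕ).testBit k ∧ ¬(b : ℕ).testBit k) ∧ c i = none := by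
  rw [mem_sdiff, hA, hB]
  cases c i <;> simp

theorem sdiff_eq_map_product
    (hA : ∀ k i, finProdFinEquiv (k, i) ∈ A ↔ ((c i).getD a : ℕ).testBit k)
    (hB : ∀ k i, finProdFinEquiv (k, i) ∈ B ↔ ((c i).getD b : ℕ).testBit k) :
    A \ B = (({k | (a : ℕ).testBit k ∧ ¬(b : ℕ).testBit k} : Finset (Fin 3)) ×ˢ
      ({i | c i = none} : Finset (Fin m))).map finProdFinEquiv.toEmbedding := by
  ext x
  obtain ⟨⟨k, i⟩, rfl⟩ := finProdFinEquiv.surjective x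
  simp [finProdFinEquiv_mem_sdiff_iff hA hB]

end

/-- A combinatorial line in `[8]^m` is encoded by `c : Fin m → Option (Fin 8)`, where
`c i = none` means `i` is an active coordinate; the point `L r` of the line is
`fun i => (c i).getD r`. -/
theorem stmt_13 (m : ℕ) (A B : Finset (Fin (3 * m)))
    (c : Fin m → Option (Fin 8)) (hW : ∃ i, c i = none)
    (hA : ∀ i : Fin m,
      ((if (⟨(i : ℕ), by omega⟩ : Fin (3 * m)) ∈ A then 1 else 0) +
        2 * (if (⟨(i : ℕ) + m, by omega⟩ : Fin (3 * m)) ∈ A then 1 else 0) +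
        4 * (if (⟨(i : ℕ) + 2 * m, by omega⟩ : Fin (3 * m)) ∈ A then 1 else 0))
      = (((c i).getD 1 : Fin 8) : ℕ))
    (hB : ∀ i : Fin m,
      ((if (⟨(i : ℕ), by omega⟩ : Fin (3 * m)) ∈ B then 1 else 0) +
        2 * (if (⟨(i : ℕ) + m, by omega⟩ : Fin (3 * m)) ∈ B then 1 else 0) +
        4 * (if (⟨(i : ℕ) + 2 * m, by omega⟩ : Fin (3 * m)) ∈ B then 1 else 0))
      = (((c i).getD 6 : Fin 8) : ℕ)) :
    (B \ A).card = 2 * (A \ B).card ∧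
    (A \ B).Nonempty ∧
    (∀ a ∈ A \ B, (a : ℕ) < m) ∧
    (∀ b ∈ B \ A, m ≤ (b : ℕ)) ∧
    (∀ a ∈ A \ B, ∀ b ∈ B \ A, a < b) := by
  have hA' k i := finProdFinEquiv_mem_iff_testBit A rfl rfl rfl (hA i) k
  have hB' k i := finProdFinEquiv_mem_iff_testBit B rfl rfl rfl (hB i) k
  set W : Finset (Fin m) := {i | c i = none}
  have hAB : A \ B = ({0} ×ˢ W).map finProdFinEquiv.toEmbedding := by
    rw [sdiff_eq_map_product hA' hB']; rfl
  have hBA : B \ A = ({1, 2} ×ˢ W).map finProdFinEquiv.toEmbedding := by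
    rw [sdiff_eq_map_product hB' hA']; rfl
  have hlt : ∀ a ∈ A \ B, (a : ℕ) < m := by
    simp only [hAB, mem_map, mem_product, mem_singleton]
    rintro _ ⟨⟨k, i⟩, ⟨rfl, -⟩, rfl⟩
    simp
  have hle : ∀ b ∈ B \ A, m ≤ (b : ℕ) := by
    simp only [hBA, mem_map, mem_product, mem_insert, mem_singleton]
    rintro _ ⟨⟨k, i⟩, ⟨hk, -⟩, rfl⟩
    rcases hk with rfl | rfl <;> simp; omega
  refine ⟨?_, ?_, hlt, hle, fun a ha b hb => (hlt a ha).trans_le (hle b hb)⟩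
  · simp [hAB, hBA, card_product]
  · obtain ⟨i, hi⟩ := hW
    rw [hAB]
    exact (singleton_nonempty 0 |>.product ⟨i, by simpa [W] using hi⟩).map
end

section
/- Let t be even, γ ≥ 4/t, and 𝒟 a family of (t/2)-subsets of a t-set T with |𝒟| = γ·C(t, t/2). Then the number of unordered neighbour pairs in 𝒟 (pairs B, B' ∈ 𝒟 with |B △ B'| = 2) is at least (γ·t²/32)·|𝒟|. -/
/-!
Write `t = 2k` and let `y_A` count the members of `𝒟` inside a `(k+1)`-subset `A` of `T`.
Any two of them are neighbours and their union is `A`, so distinct `A` contribute disjoint sets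
of `choose y_A 2` neighbour pairs. Every `k`-set lies in `k` such `A`, so `∑ y_A = k |𝒟|`, and
Cauchy–Schwarz over the `choose (2k) (k+1) ≤ choose (2k) k` sets `A`, with `γ k ≥ 2` absorbing the
linear term, gives at least `γ t² |𝒟| / 16` neighbour pairs.
-/

open Finset

lemma Nat.add_two_mul_choose_two (n : ℕ) : n + 2 * n.choose 2 = n ^ 2 := by
  induction n with
  | zero => rfl
  | succ n ih => rw [Nat.choose_succ_succ, Nat.choose_one_right]; nlinarith

lemma sq_sum_le_card_mul_sum_add_two_mul_sum_choose_two {ι : Type*} (s : Finset ι) (y : ι → ℕ) :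
    (∑ i ∈ s, y i) ^ 2 ≤ #s * (∑ i ∈ s, y i + 2 * ∑ i ∈ s, (y i).choose 2) := by
  calc (∑ i ∈ s, y i) ^ 2 ≤ #s * ∑ i ∈ s, y i ^ 2 := sq_sum_le_card_mul_sum_sq
    _ = _ := by simp only [mul_sum, ← sum_add_distrib, Nat.add_two_mul_choose_two]

namespace Finset

variable {α : Type*} [DecidableEq α]

def neighbourPairs (𝒟 : Finset (Finset α)) : Finset (Finset (Finset α)) :=
  (𝒟.powersetCard 2).filter fun P => ∃ B ∈ P, ∃ B' ∈ P, B ≠ B' ∧ #(symmDiff B B') = 2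

lemma card_filter_superset_powersetCard_succ {D T : Finset α} (hDT : D ⊆ T) :
    #{A ∈ T.powersetCard (#D + 1) | D ⊆ A} = #T - #D := by
  have : {A ∈ T.powersetCard (#D + 1) | D ⊆ A} = (T \ D).image (insert · D) := by
    ext A
    simp only [mem_filter, mem_powersetCard, mem_image, mem_sdiff]
    constructor
    · rintro ⟨⟨hAT, hA⟩, hDA⟩
      obtain ⟨x, hxA, hxD⟩ := exists_of_ssubset (ssubset_of_subset_of_ne hDA (by rintro rfl; omega))
      refine ⟨x, ⟨hAT hxA, hxD⟩, eq_of_subset_of_card_le (insert_subset hxA hDA) ?_⟩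
      rw [card_insert_of_notMem hxD, hA]
    · rintro ⟨x, ⟨hxT, hxD⟩, rfl⟩
      exact ⟨⟨insert_subset hxT hDT, card_insert_of_notMem hxD⟩, subset_insert x D⟩
  rw [this, card_image_of_injOn, card_sdiff_of_subset hDT]
  exact fun x hx y _ hxy => (insert_inj (mem_sdiff.1 hx).2).1 hxy

lemma sum_card_filter_subset_powersetCard_succ {𝒟 : Finset (Finset α)} {T : Finset α} {k : ℕ}
    (h𝒟 : 𝒟 ⊆ T.powersetCard k) :
    ∑ A ∈ T.powersetCard (k + 1), #{D ∈ 𝒟 | D ⊆ A} = (#T - k) * #𝒟 := by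
  calc ∑ A ∈ T.powersetCard (k + 1), #{D ∈ 𝒟 | D ⊆ A}
      = ∑ D ∈ 𝒟, #{A ∈ T.powersetCard (k + 1) | D ⊆ A} :=
        (sum_card_bipartiteAbove_eq_sum_card_bipartiteBelow (s := 𝒟)
          (t := T.powersetCard (k + 1)) (r := (· ⊆ ·))).symm
    _ = ∑ _D ∈ 𝒟, (#T - k) := sum_congr rfl fun D hD => by
        obtain ⟨hDT, rfl⟩ := mem_powersetCard.1 (h𝒟 hD)
        exact card_filter_superset_powersetCard_succ hDT
    _ = (#T - k) * #𝒟 := by rw [sum_const, smul_eq_mul, mul_comm]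

lemma union_eq_of_ne_of_subset {D D' A : Finset α} {k : ℕ} (hD : #D = k) (hD' : #D' = k)
    (hA : #A = k + 1) (hDA : D ⊆ A) (hD'A : D' ⊆ A) (hne : D ≠ D') : D ∪ D' = A := by
  have hD'D : ¬D' ⊆ D := fun h => hne (eq_of_subset_of_card_le h (by omega)).symm
  have hssub : D ⊂ D ∪ D' :=
    ssubset_of_subset_of_ne subset_union_left fun h => hD'D (h ▸ subset_union_right)
  have : k < #(D ∪ D') := hD ▸ card_lt_card hssub
  exact eq_of_subset_of_card_le (union_subset hDA hD'A) (by omega)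

lemma card_symmDiff_eq_two_of_card_union {D D' : Finset α} {k : ℕ} (hD : #D = k)
    (hD' : #D' = k) (hunion : #(D ∪ D') = k + 1) : #(symmDiff D D') = 2 := by
  have := card_union_add_card_inter D D'
  rw [symmDiff_eq_sup_sdiff_inf, sup_eq_union, inf_eq_inter,
    card_sdiff_of_subset inter_subset_union]
  omega

lemma powersetCard_two_filter_subset_subset_filter_neighbourPairs {𝒟 : Finset (Finset α)}
    {A : Finset α} {k : ℕ} (h𝒟 : ∀ D ∈ 𝒟, #D = k) (hA : #A = k + 1) :
    {D ∈ 𝒟 | D ⊆ A}.powersetCard 2 ⊆ {P ∈ neighbourPairs 𝒟 | P.sup id = A} := by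
  intro P hP
  obtain ⟨hPsub, hP2⟩ := mem_powersetCard.1 hP
  obtain ⟨D, D', hne, rfl⟩ := card_eq_two.1 hP2
  obtain ⟨⟨hD, hDA⟩, hD', hD'A⟩ : (D ∈ 𝒟 ∧ D ⊆ A) ∧ D' ∈ 𝒟 ∧ D' ⊆ A := by
    simpa [insert_subset_iff] using hPsub
  have hunion := union_eq_of_ne_of_subset (h𝒟 D hD) (h𝒟 D' hD') hA hDA hD'A hne
  refine mem_filter.2 ⟨mem_filter.2 ⟨mem_powersetCard.2 ⟨?_, hP2⟩, D, ?_, D', ?_, hne, ?_⟩, ?_⟩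
  · simpa [insert_subset_iff] using ⟨hD, hD'⟩
  · simp
  · simp
  · exact card_symmDiff_eq_two_of_card_union (h𝒟 D hD) (h𝒟 D' hD') (hunion ▸ hA)
  · simpa using hunion

lemma sum_choose_two_card_filter_subset_le_card_neighbourPairs {𝒟 𝒜 : Finset (Finset α)}
    {k : ℕ} (h𝒟 : ∀ D ∈ 𝒟, #D = k) (h𝒜 : ∀ A ∈ 𝒜, #A = k + 1) :
    ∑ A ∈ 𝒜, (#{D ∈ 𝒟 | D ⊆ A}).choose 2 ≤ #(neighbourPairs 𝒟) :=
  calc ∑ A ∈ 𝒜, (#{D ∈ 𝒟 | D ⊆ A}).choose 2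
      = ∑ A ∈ 𝒜, #({D ∈ 𝒟 | D ⊆ A}.powersetCard 2) := by simp only [card_powersetCard]
    _ ≤ ∑ A ∈ 𝒜, #{P ∈ neighbourPairs 𝒟 | P.sup id = A} := sum_le_sum fun A hA =>
        card_le_card (powersetCard_two_filter_subset_subset_filter_neighbourPairs h𝒟 (h𝒜 A hA))
    _ = #{P ∈ neighbourPairs 𝒟 | P.sup id ∈ 𝒜} := sum_card_fiberwise_eq_card_filter _ _ _
    _ ≤ #(neighbourPairs 𝒟) := card_filter_le _ _

end Finset

lemma le_of_sq_le_mul_add {γ k c p : ℝ} (hc : 0 < c) (hγk : 2 ≤ γ * k)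
    (h : (k * (γ * c)) ^ 2 ≤ c * (k * (γ * c) + 2 * p)) :
    γ * (k + k) ^ 2 / 32 * (γ * c) ≤ p := by
  have h' : (γ * k) ^ 2 * c ≤ γ * k * c + 2 * p := by
    have : c * ((γ * k) ^ 2 * c) ≤ c * (γ * k * c + 2 * p) := by linarith
    exact le_of_mul_le_mul_left this hc
  nlinarith [mul_le_mul_of_nonneg_right hγk (by positivity : 0 ≤ γ * k * c)]

theorem stmt_18 {α : Type*} [DecidableEq α] (T : Finset α) (t : ℕ) (ht : T.card = t)
    (hteven : Even t) (γ : ℝ) (hγ : 4 / (t : ℝ) ≤ γ)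
    (𝒟 : Finset (Finset α)) (h𝒟 : 𝒟 ⊆ T.powersetCard (t / 2))
    (hcard : (𝒟.card : ℝ) = γ * (Nat.choose t (t / 2) : ℝ)) :
    γ * (t : ℝ) ^ 2 / 32 * (𝒟.card : ℝ) ≤
      (((𝒟.powersetCard 2).filter
          (fun P => ∃ B ∈ P, ∃ B' ∈ P, B ≠ B' ∧ (symmDiff B B').card = 2)).card : ℝ) := by
  obtain ⟨k, rfl⟩ := hteven
  rcases k.eq_zero_or_pos with rfl | hk
  · simp
  have hhalf : (k + k) / 2 = k := by omega
  rw [hhalf] at h𝒟 hcard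
  set 𝒜 := T.powersetCard (k + 1)
  have hsum : ∑ A ∈ 𝒜, #{D ∈ 𝒟 | D ⊆ A} = k * #𝒟 := by
    rw [sum_card_filter_subset_powersetCard_succ h𝒟, ht, Nat.add_sub_cancel]
  have h𝒜 : #𝒜 ≤ (k + k).choose k := by
    simpa only [𝒜, card_powersetCard, ht, hhalf] using Nat.choose_le_middle (k + 1) (k + k)
  have hpairs := sum_choose_two_card_filter_subset_le_card_neighbourPairs (𝒜 := 𝒜)
    (fun D hD => (mem_powersetCard.1 (h𝒟 hD)).2) (fun A hA => (mem_powersetCard.1 hA).2)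
  have hCS : (k * #𝒟) ^ 2 ≤ (k + k).choose k * (k * #𝒟 + 2 * #(neighbourPairs 𝒟)) :=
    calc (k * #𝒟) ^ 2
        ≤ #𝒜 * (k * #𝒟 + 2 * ∑ A ∈ 𝒜, (#{D ∈ 𝒟 | D ⊆ A}).choose 2) :=
          hsum ▸ sq_sum_le_card_mul_sum_add_two_mul_sum_choose_two 𝒜 _
      _ ≤ _ := by gcongr
  have hγk : 2 ≤ γ * k := by
    rw [div_le_iff₀ (by positivity)] at hγ
    push_cast at hγ
    linarith
  rw [hcard]
  push_cast
  refine le_of_sq_le_mul_add (by exact_mod_cast Nat.choose_pos (by omega)) hγk ?_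
  rw [← hcard]
  exact_mod_cast hCS
end
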